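/- Let 𝔸 = (A, ≤, →, Σ) be an implicative algebra with |A| < κ for a strongly inaccessible cardinal κ, and let W, ∈_W, =_W and the interpretation ‖·‖ be as defined below. Then W validates every instance of the Separation scheme: for every formula in context φ[w₁,…,wₙ,x,z], the interpretation of ∀w₁…∀wₙ ∀x ∃y (∀z(z ∈ y → (z ∈ x ∧ φ)) ∧ ∀z(z ∈ x → (φ → z ∈ y))) belongs to Σ. -/

import Mathlib

universe u

/-- An implicative algebra `𝔸 = (A, ≤, →, Σ)`:  a complete lattice `(A, ≤)` together with an
implication `imp` which is antitone in its first argument, monotone in its second argument and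
turns infima in the second argument into infima, and a separator `Sig ⊆ A` which is upward
closed, closed under modus ponens and contains the combinators `K` and `S`. -/
structure ImplicativeAlgebra (A : Type u) [CompleteLattice A] where
  imp : A → A → A
  imp_antitone : ∀ ⦃a a' b : A⦄, a ≤ a' → imp a' b ≤ imp a b
  imp_monotone : ∀ ⦃a b b' : A⦄, b ≤ b' → imp a b ≤ imp a b'
  imp_sInf : ∀ (a : A) (S : Set A), imp a (sInf S) = ⨅ b ∈ S, imp a b
  Sig : Set A
  Sig_upward : ∀ ⦃a b : A⦄, a ∈ Sig → a ≤ b → b ∈ Sig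
  Sig_mp : ∀ ⦃a b : A⦄, imp a b ∈ Sig → a ∈ Sig → b ∈ Sig
  Sig_K : (⨅ a : A, ⨅ b : A, imp a (imp b a)) ∈ Sig
  Sig_S : (⨅ a : A, ⨅ b : A, ⨅ c : A,
      imp (imp a (imp b c)) (imp (imp a b) (imp a c))) ∈ Sig

namespace ImplicativeAlgebra

variable {A : Type u} [CompleteLattice A]

/-- `a × b := ⨅ x, ((a → (b → x)) → x)`. -/
def times (IA : ImplicativeAlgebra A) (a b : A) : A :=
  ⨅ x : A, IA.imp (IA.imp a (IA.imp b x)) x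

/-- `a + b := ⨅ x, ((a → x) → ((b → x) → x))`. -/
def plus (IA : ImplicativeAlgebra A) (a b : A) : A :=
  ⨅ x : A, IA.imp (IA.imp a x) (IA.imp (IA.imp b x) x)

/-- `∃⃗_{i} f i := ⨅ x, ((⨅ i, (f i → x)) → x)`.  (`∀⃗` is just `⨅`.) -/
def aex (IA : ImplicativeAlgebra A) {ι : Sort*} (f : ι → A) : A :=
  ⨅ x : A, IA.imp (⨅ i, IA.imp (f i) x) x

/-- `φ ⊢_{Σ[I]} ψ` iff `⨅ i, (φ i → ψ i) ∈ Σ`. -/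
def SigLe (IA : ImplicativeAlgebra A) {ι : Sort*} (f g : ι → A) : Prop :=
  (⨅ i, IA.imp (f i) (g i)) ∈ IA.Sig

/-- `φ ≡_{Σ[I]} ψ` iff `φ ⊢_{Σ[I]} ψ` and `ψ ⊢_{Σ[I]} φ`. -/
def SigEquiv (IA : ImplicativeAlgebra A) {ι : Sort*} (f g : ι → A) : Prop :=
  IA.SigLe f g ∧ IA.SigLe g f

end ImplicativeAlgebra

/-- Pre-elements of the cumulative hierarchy of partial functions valued in `A`:
an element is an `A`-labelled family of previously constructed elements, i.e. a partial
function (presented by a family indexed by its domain) from earlier elements to `A`. -/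
inductive PreW (A : Type u) : Type (u + 1)
  | mk (ι : Type u) (fam : ι → PreW A) (val : ι → A)

namespace PreW

variable {A : Type u}

/-- The (index type of the) domain of a partial function. -/
def dom : PreW A → Type u
  | ⟨ι, _, _⟩ => ι

/-- The family of elements of the domain. -/
def fam : (w : PreW A) → w.dom → PreW A
  | ⟨_, f, _⟩ => f

/-- The values in `A` of the partial function. -/
def val : (w : PreW A) → w.dom → A
  | ⟨_, _, v⟩ => v

/-- `w` is hereditarily of size `< κ`:  this carves out exactly the elements of the stage
`W_κ` of the hierarchy (for `κ` inaccessible). -/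
def HSmall (κ : Cardinal.{u}) : PreW A → Prop
  | ⟨ι, f, _⟩ => Cardinal.mk ι < κ ∧ ∀ i, HSmall κ (f i)

theorem HSmall.fam {κ : Cardinal.{u}} :
    ∀ {w : PreW A}, w.HSmall κ → ∀ i : w.dom, (w.fam i).HSmall κ
  | ⟨_, _, _⟩, h, i => h.2 i

/-- The rank of an element of the hierarchy. -/
noncomputable def rank : PreW A → Ordinal.{u}
  | ⟨_, f, _⟩ => ⨆ i, Order.succ (rank (f i))

theorem rank_lt_mk {ι : Type u} (f : ι → PreW A) (v : ι → A) (i : ι) :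
    (f i).rank < (PreW.mk ι f v).rank := by
  have h : Order.succ (f i).rank ≤ ⨆ j, Order.succ (f j).rank := Ordinal.le_iSup _ i
  have : (f i).rank < ⨆ j, Order.succ (f j).rank :=
    lt_of_lt_of_le (Order.lt_succ _) h
  simpa [rank] using this

end PreW

namespace ImplicativeAlgebra

variable {A : Type u} [CompleteLattice A]

/-- `α =_W β`, defined by recursion on rank:
`α =_W β := (α ⊆_W β) × (β ⊆_W α)` where
`α ⊆_W β := ∀⃗_{t ∈ dom α} (α t → (fam α t ∈_W β))` and
`γ ∈_W β := ∃⃗_{s ∈ dom β} (β s × (fam β s =_W γ))`. -/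
noncomputable def eqW (IA : ImplicativeAlgebra A) : PreW A → PreW A → A
  | ⟨ι₁, f₁, v₁⟩, ⟨ι₂, f₂, v₂⟩ =>
    IA.times
      (⨅ t : ι₁, IA.imp (v₁ t)
        (IA.aex fun s : ι₂ => IA.times (v₂ s) (IA.eqW (f₂ s) (f₁ t))))
      (⨅ t : ι₂, IA.imp (v₂ t)
        (IA.aex fun s : ι₁ => IA.times (v₁ s) (IA.eqW (f₁ s) (f₂ t))))
termination_by α β => max α.rank β.rank
decreasing_by
  · exact max_lt (lt_max_of_lt_right (PreW.rank_lt_mk f₂ v₂ s))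
      (lt_max_of_lt_left (PreW.rank_lt_mk f₁ v₁ t))
  · exact max_lt (lt_max_of_lt_left (PreW.rank_lt_mk f₁ v₁ s))
      (lt_max_of_lt_right (PreW.rank_lt_mk f₂ v₂ t))

/-- `α ∈_W β := ∃⃗_{s ∈ dom β} (β s × (fam β s =_W α))`. -/
noncomputable def memW (IA : ImplicativeAlgebra A) (α β : PreW A) : A :=
  IA.aex fun s : β.dom => IA.times (β.val s) (IA.eqW (β.fam s) α)

/-- `α ⊆_W β := ∀⃗_{t ∈ dom α} (α t → (fam α t ∈_W β))`. -/
noncomputable def subW (IA : ImplicativeAlgebra A) (α β : PreW A) : A :=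
  ⨅ t : α.dom, IA.imp (α.val t) (IA.memW (α.fam t) β)

end ImplicativeAlgebra

/-- The stage `W = W_κ` of the hierarchy: all hereditarily `< κ`-sized elements. -/
def WSet (A : Type u) (κ : Cardinal.{u}) : Type (u + 1) :=
  {w : PreW A // w.HSmall κ}

/-- An element of the domain of `w ∈ W`, as an element of `W`. -/
def WSet.fam {A : Type u} {κ : Cardinal.{u}} (w : WSet A κ) (i : w.1.dom) : WSet A κ :=
  ⟨w.1.fam i, w.2.fam i⟩

/-- Formulas (in context of length `n`) of the first-order language of set theory, with
(de Bruijn-style) variables `Fin n`, binary predicates `∈` and `=`, connectives `⊥`, `∧`, `∨`,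
`→` and quantifiers `∃`, `∀` (binding the last variable of the enlarged context). -/
inductive SetFormula : ℕ → Type
  | bot {n : ℕ} : SetFormula n
  | mem {n : ℕ} (i j : Fin n) : SetFormula n
  | eq {n : ℕ} (i j : Fin n) : SetFormula n
  | and {n : ℕ} (φ ψ : SetFormula n) : SetFormula n
  | or {n : ℕ} (φ ψ : SetFormula n) : SetFormula n
  | imp {n : ℕ} (φ ψ : SetFormula n) : SetFormula n
  | ex {n : ℕ} (φ : SetFormula (n + 1)) : SetFormula n
  | all {n : ℕ} (φ : SetFormula (n + 1)) : SetFormula n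

namespace SetFormula

/-- Renaming of variables (since the only terms of the language of set theory are variables,
substitution is a special case). -/
def rename : {n m : ℕ} → (Fin n → Fin m) → SetFormula n → SetFormula m
  | _, _, _, .bot => .bot
  | _, _, f, .mem i j => .mem (f i) (f j)
  | _, _, f, .eq i j => .eq (f i) (f j)
  | _, _, f, .and φ ψ => .and (φ.rename f) (ψ.rename f)
  | _, _, f, .or φ ψ => .or (φ.rename f) (ψ.rename f)
  | _, _, f, .imp φ ψ => .imp (φ.rename f) (ψ.rename f)
  | _, _, f, .ex φ => .ex (φ.rename (Fin.snoc (Fin.castSucc ∘ f) (Fin.last _)))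
  | _, _, f, .all φ => .all (φ.rename (Fin.snoc (Fin.castSucc ∘ f) (Fin.last _)))

/-- Universal closure `∀x₁ … ∀xₙ φ` of a formula in context of length `n`. -/
def allClose : {n : ℕ} → SetFormula n → SetFormula 0
  | 0, φ => φ
  | _ + 1, φ => allClose (.all φ)

end SetFormula

namespace ImplicativeAlgebra

variable {A : Type u} [CompleteLattice A]

/-- The interpretation `‖φ[x₁,…,xₙ]‖ : Wⁿ → A` of a formula in context, by recursion on the
structure of `φ`:  atomic formulas are interpreted by `∈_W` and `=_W`, `∧` by `×`, `∨` by `+`,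
`→` by `→`, `∃` by `∃⃗` over `W` and `∀` by `∀⃗` (i.e. `⨅`) over `W`. -/
noncomputable def interp (IA : ImplicativeAlgebra A) (κ : Cardinal.{u}) :
    {n : ℕ} → SetFormula n → (Fin n → WSet A κ) → A
  | _, .bot, _ => ⊥
  | _, .mem i j, v => IA.memW (v i).1 (v j).1
  | _, .eq i j, v => IA.eqW (v i).1 (v j).1
  | _, .and φ ψ, v => IA.times (IA.interp κ φ v) (IA.interp κ ψ v)
  | _, .or φ ψ, v => IA.plus (IA.interp κ φ v) (IA.interp κ ψ v)
  | _, .imp φ ψ, v => IA.imp (IA.interp κ φ v) (IA.interp κ ψ v)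
  | _, .ex φ, v => IA.aex fun β : WSet A κ => IA.interp κ φ (Fin.snoc v β)
  | _, .all φ, v => ⨅ β : WSet A κ, IA.interp κ φ (Fin.snoc v β)

end ImplicativeAlgebra

/-!
The witness for `{z ∈ x | φ z}` is the name with the same domain as `x` whose values are
`x t × φ (x t)`. Both halves of separation are then realized uniformly in the parameters as
soon as `φ` is substitutive, i.e. `a =_W b → φ a → φ b` has a realizer in `Σ`.
Substitutivity follows by induction on `φ` from the compatibility of `∈_W` and `=_W` with
`=_W`, which reduces to symmetry and transitivity of `=_W`; transitivity is realized by a fixed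
point combinator, recursing on the elements of the middle set. All realizers are closed
λ-terms with constants in `Σ`, hence lie in `Σ` by combinatory completeness (bracket
abstraction with `K` and `S`).
-/

theorem PreW.HSmall.mk_dom_fam {A : Type u} {κ : Cardinal.{u}} :
    ∀ {w : PreW A}, w.HSmall κ → ∀ val : w.dom → A, (PreW.mk w.dom w.fam val).HSmall κ
  | ⟨_, _, _⟩, h, _ => h

namespace ImplicativeAlgebra

variable {A : Type u} [CompleteLattice A] (IA : ImplicativeAlgebra A)

theorem imp_iInf {ι : Sort*} (a : A) (f : ι → A) :
    IA.imp a (⨅ i, f i) = ⨅ i, IA.imp a (f i) := by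
  rw [iInf, IA.imp_sInf, iInf_range]

def app (a b : A) : A := sInf {c | a ≤ IA.imp b c}

def abs (f : A → A) : A := ⨅ a, IA.imp a (f a)

theorem le_imp_app (a b : A) : a ≤ IA.imp b (IA.app a b) := by
  rw [app, sInf_eq_iInf, IA.imp_iInf]
  exact le_iInf fun c => by
    rw [IA.imp_iInf]
    exact le_iInf fun hc => hc

theorem app_le {a b c : A} (h : a ≤ IA.imp b c) : IA.app a b ≤ c := sInf_le h

theorem app_le_of_le {a b b' c : A} (h : a ≤ IA.imp b c) (hb : b' ≤ b) : IA.app a b' ≤ c :=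
  IA.app_le (h.trans (IA.imp_antitone hb))

theorem app_mono {a a' b b' : A} (ha : a ≤ a') (hb : b ≤ b') : IA.app a b ≤ IA.app a' b' :=
  IA.app_le <| ha.trans <| (IA.le_imp_app a' b').trans (IA.imp_antitone hb)

theorem app_mem_Sig {a b : A} (ha : a ∈ IA.Sig) (hb : b ∈ IA.Sig) : IA.app a b ∈ IA.Sig :=
  IA.Sig_mp (IA.Sig_upward ha (IA.le_imp_app a b)) hb

theorem abs_le_imp {f : A → A} {a b : A} (h : f a ≤ b) : IA.abs f ≤ IA.imp a b :=
  (iInf_le _ a).trans (IA.imp_monotone h)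

theorem app_abs_le (f : A → A) (a : A) : IA.app (IA.abs f) a ≤ f a :=
  IA.app_le (IA.abs_le_imp le_rfl)

def combK : A := ⨅ a : A, ⨅ b : A, IA.imp a (IA.imp b a)

def combS : A := ⨅ a : A, ⨅ b : A, ⨅ c : A,
  IA.imp (IA.imp a (IA.imp b c)) (IA.imp (IA.imp a b) (IA.imp a c))

def combI : A := IA.app (IA.app IA.combS IA.combK) IA.combK

theorem combK_le (a b : A) : IA.combK ≤ IA.imp a (IA.imp b a) :=
  (iInf_le _ a).trans (iInf_le _ b)

theorem combS_le (a b c : A) :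
    IA.combS ≤ IA.imp (IA.imp a (IA.imp b c)) (IA.imp (IA.imp a b) (IA.imp a c)) :=
  ((iInf_le _ a).trans (iInf_le _ b)).trans (iInf_le _ c)

theorem app_combK_le {a b c : A} (h : c ≤ a) : IA.app (IA.app IA.combK c) b ≤ a :=
  IA.app_le (IA.app_le_of_le (IA.combK_le a b) h)

theorem app_combS_le (f g a : A) :
    IA.app (IA.app (IA.app IA.combS f) g) a ≤ IA.app (IA.app f a) (IA.app g a) := by
  have hf : f ≤ IA.imp a (IA.imp (IA.app g a) (IA.app (IA.app f a) (IA.app g a))) :=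
    (IA.le_imp_app f a).trans (IA.imp_monotone (IA.le_imp_app _ _))
  have hSf : IA.app IA.combS f ≤ IA.imp (IA.imp a (IA.app g a))
      (IA.imp a (IA.app (IA.app f a) (IA.app g a))) :=
    IA.app_le_of_le (IA.combS_le _ _ _) hf
  exact IA.app_le (IA.app_le_of_le hSf (IA.le_imp_app g a))

theorem app_combI_le (a : A) : IA.app IA.combI a ≤ a :=
  (IA.app_combS_le IA.combK IA.combK a).trans (IA.app_combK_le le_rfl)

theorem combK_mem_Sig : IA.combK ∈ IA.Sig := IA.Sig_K

theorem combS_mem_Sig : IA.combS ∈ IA.Sig := IA.Sig_S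

theorem combI_mem_Sig : IA.combI ∈ IA.Sig :=
  IA.app_mem_Sig (IA.app_mem_Sig IA.combS_mem_Sig IA.combK_mem_Sig) IA.combK_mem_Sig

inductive CombTerm (A : Type u) : ℕ → Type u
  | var {n} : Fin n → CombTerm A n
  | const {n} : A → CombTerm A n
  | app {n} : CombTerm A n → CombTerm A n → CombTerm A n

namespace CombTerm

@[simp] def eval : ∀ {n}, CombTerm A n → (Fin n → A) → A
  | _, var i, ρ => ρ i
  | _, const c, _ => c
  | _, app t s, ρ => IA.app (eval t ρ) (eval s ρ)

@[simp] def ConstsMemSig : ∀ {n}, CombTerm A n → Prop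
  | _, var _ => True
  | _, const c => c ∈ IA.Sig
  | _, app t s => ConstsMemSig t ∧ ConstsMemSig s

/-- Bracket abstraction of the last variable. -/
@[simp] def abstract : ∀ {n}, CombTerm A (n + 1) → CombTerm A n
  | _, var i => Fin.lastCases (const IA.combI) (fun j => app (const IA.combK) (var j)) i
  | _, const c => app (const IA.combK) (const c)
  | _, app t s => app (app (const IA.combS) (abstract t)) (abstract s)

variable {IA}

theorem eval_mem_Sig : ∀ {n} {t : CombTerm A n}, t.ConstsMemSig IA →
    ∀ {ρ : Fin n → A}, (∀ i, ρ i ∈ IA.Sig) → t.eval IA ρ ∈ IA.Sig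
  | _, var i, _, _, hρ => by simpa using hρ i
  | _, const _, ht, _, _ => by simpa using ht
  | _, app _ _, ht, _, hρ => by
    simp only [ConstsMemSig] at ht
    simpa using IA.app_mem_Sig (eval_mem_Sig ht.1 hρ) (eval_mem_Sig ht.2 hρ)

theorem constsMemSig_abstract : ∀ {n} {t : CombTerm A (n + 1)}, t.ConstsMemSig IA →
    (t.abstract IA).ConstsMemSig IA
  | _, var i, _ => by
    refine Fin.lastCases ?_ (fun j => ?_) i
    · simpa using IA.combI_mem_Sig
    · simpa using IA.combK_mem_Sig
  | _, const _, ht => by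
    simp only [ConstsMemSig] at ht
    simpa using ⟨IA.combK_mem_Sig, ht⟩
  | _, app _ _, ht => by
    simp only [ConstsMemSig] at ht
    simpa using ⟨⟨IA.combS_mem_Sig, constsMemSig_abstract ht.1⟩, constsMemSig_abstract ht.2⟩

theorem app_eval_abstract_le : ∀ {n} (t : CombTerm A (n + 1)) (ρ : Fin n → A) (a : A),
    IA.app ((t.abstract IA).eval IA ρ) a ≤ t.eval IA (Fin.snoc ρ a)
  | _, var i, ρ, a => by
    refine Fin.lastCases ?_ (fun j => ?_) i
    · simpa using IA.app_combI_le a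
    · simpa using IA.app_combK_le (le_refl (ρ j))
  | _, const c, _, _ => by simpa using IA.app_combK_le (le_refl c)
  | _, app t s, ρ, a => by
    simpa using (IA.app_combS_le _ _ _).trans
      (IA.app_mono (app_eval_abstract_le t ρ a) (app_eval_abstract_le s ρ a))

end CombTerm

inductive Definable (IA : ImplicativeAlgebra A) : ∀ {n : ℕ}, ((Fin n → A) → A) → Prop
  | var {n} (i : Fin n) : Definable IA fun ρ => ρ i
  | const {n} {c : A} (h : c ∈ IA.Sig) : Definable IA (n := n) fun _ => c
  | app {n} {f g : (Fin n → A) → A} (hf : Definable IA f) (hg : Definable IA g) :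
      Definable IA fun ρ => IA.app (f ρ) (g ρ)
  | lam {n} {f : (Fin (n + 1) → A) → A} (hf : Definable IA f) :
      Definable IA fun ρ => IA.abs fun a => f (Fin.snoc ρ a)

namespace Definable

variable {IA}

/-- Combinatory completeness. -/
theorem exists_combTerm {n} {f : (Fin n → A) → A} (hf : Definable IA f) :
    ∃ t : CombTerm A n, t.ConstsMemSig IA ∧ ∀ ρ, t.eval IA ρ ≤ f ρ := by
  induction hf with
  | var i => exact ⟨.var i, by simp, fun _ => by simp⟩
  | const h => exact ⟨.const _, by simpa using h, fun _ => by simp⟩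
  | app _ _ ihf ihg =>
    obtain ⟨t, ht, htf⟩ := ihf
    obtain ⟨s, hs, hsg⟩ := ihg
    exact ⟨.app t s, by simpa using ⟨ht, hs⟩,
      fun ρ => by simpa using IA.app_mono (htf ρ) (hsg ρ)⟩
  | lam _ ih =>
    obtain ⟨t, ht, htf⟩ := ih
    refine ⟨t.abstract IA, CombTerm.constsMemSig_abstract ht, fun ρ => le_iInf fun a => ?_⟩
    exact (IA.le_imp_app _ a).trans
      (IA.imp_monotone ((CombTerm.app_eval_abstract_le t ρ a).trans (htf _)))

theorem mem_Sig {c : A} (h : Definable IA fun _ : Fin 0 → A => c) : c ∈ IA.Sig := by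
  obtain ⟨t, ht, htc⟩ := h.exists_combTerm
  exact IA.Sig_upward (CombTerm.eval_mem_Sig ht finZeroElim) (htc finZeroElim)

theorem abs {n} {f : (Fin n → A) → A → A}
    (h : Definable IA fun σ : Fin (n + 1) → A => f (fun i => σ i.castSucc) (σ (Fin.last n))) :
    Definable IA fun ρ => IA.abs (f ρ) := by
  simpa using h.lam

theorem rename {n} {f : (Fin n → A) → A} (hf : Definable IA f) :
    ∀ {m} (r : Fin n → Fin m), Definable IA fun ρ => f (fun i => ρ (r i)) := by
  induction hf with
  | var i => exact fun r => var (r i)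
  | const h => exact fun _ => const h
  | app _ _ ihf ihg => exact fun r => app (ihf r) (ihg r)
  | @lam k f _ ih =>
    intro m r
    convert lam (ih (Fin.snoc (fun i => (r i).castSucc) (Fin.last m))) using 4 with ρ a
    congr 1
    funext i
    refine Fin.lastCases ?_ (fun j => ?_) i <;> simp

end Definable

def pair (a b : A) : A := IA.abs fun k => IA.app (IA.app k a) b

def fst (p : A) : A := IA.app p IA.combK

def snd (p : A) : A := IA.app p (IA.app IA.combK IA.combI)

def inj (c : A) : A := IA.abs fun k => IA.app k c

/-- Curry's fixed point combinator `Y f`. -/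
def fix (f : A) : A :=
  IA.app (IA.abs fun x => IA.app f (IA.app x x)) (IA.abs fun x => IA.app f (IA.app x x))

theorem pair_le_times {a' b' a b : A} (ha : a' ≤ a) (hb : b' ≤ b) :
    IA.pair a' b' ≤ IA.times a b := by
  refine le_iInf fun x => IA.abs_le_imp ?_
  exact IA.app_le (IA.app_le
    ((IA.imp_antitone ha).trans (IA.imp_monotone (IA.imp_antitone hb))))

theorem fst_le {p a b : A} (h : p ≤ IA.times a b) : IA.fst p ≤ a :=
  IA.app_le ((h.trans (iInf_le _ a)).trans (IA.imp_antitone (IA.combK_le a b)))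

theorem snd_le {p a b : A} (h : p ≤ IA.times a b) : IA.snd p ≤ b := by
  have hKI : IA.app IA.combK IA.combI ≤ IA.imp a (IA.imp b b) :=
    (IA.le_imp_app _ a).trans (IA.imp_monotone ((IA.app_combK_le le_rfl).trans
      ((IA.le_imp_app _ b).trans (IA.imp_monotone (IA.app_combI_le b)))))
  exact IA.app_le ((h.trans (iInf_le _ b)).trans (IA.imp_antitone hKI))

theorem inj_le_aex {ι : Sort*} {c : A} {f : ι → A} (i : ι) (h : c ≤ f i) :
    IA.inj c ≤ IA.aex f :=
  le_iInf fun _ => IA.abs_le_imp (IA.app_le_of_le ((iInf_le _ i).trans (IA.imp_antitone h)) le_rfl)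

theorem app_le_of_le_aex {ι : Sort*} {m k x : A} {f : ι → A} (hm : m ≤ IA.aex f)
    (hk : ∀ i, k ≤ IA.imp (f i) x) : IA.app m k ≤ x :=
  IA.app_le ((hm.trans (iInf_le _ x)).trans (IA.imp_antitone (le_iInf hk)))

theorem fix_le (f : A) : IA.fix f ≤ IA.app f (IA.fix f) := IA.app_abs_le _ _

namespace Definable

variable {IA} {n : ℕ} {f g : (Fin n → A) → A}

theorem pair (hf : Definable IA f) (hg : Definable IA g) :
    Definable IA fun ρ => IA.pair (f ρ) (g ρ) :=
  .abs (.app (.app (.var _) (hf.rename Fin.castSucc)) (hg.rename Fin.castSucc))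

theorem fst (hf : Definable IA f) : Definable IA fun ρ => IA.fst (f ρ) :=
  .app hf (.const IA.combK_mem_Sig)

theorem snd (hf : Definable IA f) : Definable IA fun ρ => IA.snd (f ρ) :=
  .app hf (.app (.const IA.combK_mem_Sig) (.const IA.combI_mem_Sig))

theorem inj (hf : Definable IA f) : Definable IA fun ρ => IA.inj (f ρ) :=
  .abs (.app (.var _) (hf.rename Fin.castSucc))

theorem fix (hf : Definable IA f) : Definable IA fun ρ => IA.fix (f ρ) :=
  .app (.abs (.app (hf.rename Fin.castSucc) (.app (.var _) (.var _))))
    (.abs (.app (hf.rename Fin.castSucc) (.app (.var _) (.var _))))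

end Definable

theorem eqW_eq_times_subW : ∀ α β : PreW A,
    IA.eqW α β = IA.times (IA.subW α β) (IA.subW β α)
  | ⟨_, _, _⟩, ⟨_, _, _⟩ => by rw [eqW]; rfl

theorem exists_eqW_symm :
    ∃ c ∈ IA.Sig, ∀ α β : PreW A, c ≤ IA.imp (IA.eqW α β) (IA.eqW β α) :=
  ⟨IA.abs fun p => IA.pair (IA.snd p) (IA.fst p),
    Definable.mem_Sig (.abs (.pair (.snd (.var _)) (.fst (.var _)))),
    fun α β => IA.abs_le_imp <| by
      rw [IA.eqW_eq_times_subW α β, IA.eqW_eq_times_subW β α]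
      exact IA.pair_le_times (IA.snd_le le_rfl) (IA.fst_le le_rfl)⟩

/-- From realizers `p` of `α ⊆ β` and `q` of `β ⊆ γ`, and a realizer `T` of transitivity for
the elements of `α`, `β`, `γ`, a realizer of `α ⊆ γ`. -/
def transSub (T p q : A) : A :=
  IA.abs fun a => IA.app (IA.app p a) (IA.abs fun w => IA.app (IA.app q (IA.fst w))
    (IA.abs fun w' => IA.inj (IA.pair (IA.fst w') (IA.app (IA.app T (IA.snd w')) (IA.snd w)))))

theorem transSub_le {T p q : A} {α β γ : PreW A} (hp : p ≤ IA.subW α β)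
    (hq : q ≤ IA.subW β γ)
    (hT : ∀ t s r, T ≤ IA.imp (IA.eqW (γ.fam r) (β.fam s))
      (IA.imp (IA.eqW (β.fam s) (α.fam t)) (IA.eqW (γ.fam r) (α.fam t)))) :
    IA.transSub T p q ≤ IA.subW α γ := by
  refine le_iInf fun t => IA.abs_le_imp ?_
  refine IA.app_le_of_le_aex (IA.app_le_of_le (hp.trans (iInf_le _ t)) le_rfl)
    fun s => IA.abs_le_imp ?_
  refine IA.app_le_of_le_aex
    (IA.app_le_of_le (hq.trans (iInf_le _ s)) (IA.fst_le le_rfl)) fun r => IA.abs_le_imp ?_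
  refine IA.inj_le_aex r (IA.pair_le_times (IA.fst_le le_rfl) ?_)
  exact IA.app_le_of_le (IA.app_le_of_le (hT t s r) (IA.snd_le le_rfl)) (IA.snd_le le_rfl)

/-- A fixed point, because the proof of `eqTrans_le` recurses on the elements of the middle
set. -/
def eqTrans : A :=
  IA.fix <| IA.abs fun T => IA.abs fun p => IA.abs fun q =>
    IA.pair (IA.transSub T (IA.fst p) (IA.fst q)) (IA.transSub T (IA.snd q) (IA.snd p))

theorem eqTrans_mem_Sig : IA.eqTrans ∈ IA.Sig := by
  have htransSub : ∀ {n} {T p q : (Fin n → A) → A}, Definable IA T → Definable IA p →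
      Definable IA q → Definable IA fun ρ => IA.transSub (T ρ) (p ρ) (q ρ) :=
    fun hT hp hq => .abs (.app (.app (hp.rename _) (.var _)) (.abs (.app
      (.app (hq.rename _) (.fst (.var _))) (.abs (.inj (.pair (.fst (.var _))
        (.app (.app (hT.rename _) (.snd (.var _))) (.snd (.var _)))))))))
  exact Definable.mem_Sig (.fix (.abs (.abs (.abs (.pair
    (htransSub (.var _) (.fst (.var _)) (.fst (.var _)))
    (htransSub (.var _) (.snd (.var _)) (.snd (.var _))))))))

theorem eqTrans_le (α β γ : PreW A) :
    IA.eqTrans ≤ IA.imp (IA.eqW α β) (IA.imp (IA.eqW β γ) (IA.eqW α γ)) := by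
  induction β generalizing α γ with
  | mk ι f v ih =>
    refine ((IA.fix_le _).trans (IA.app_abs_le _ _)).trans
      (IA.abs_le_imp (IA.abs_le_imp ?_))
    have hαβ := (IA.eqW_eq_times_subW α (.mk ι f v)).le
    have hβγ := (IA.eqW_eq_times_subW (.mk ι f v) γ).le
    rw [IA.eqW_eq_times_subW α γ]
    exact IA.pair_le_times
      (IA.transSub_le (IA.fst_le hαβ) (IA.fst_le hβγ) fun t s r => ih s _ _)
      (IA.transSub_le (IA.snd_le hβγ) (IA.snd_le hαβ) fun t s r => ih s _ _)

def RespectsEqLeft (R : PreW A → PreW A → A) : Prop :=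
  ∃ c ∈ IA.Sig, ∀ α β γ, c ≤ IA.imp (IA.eqW α β) (IA.imp (R α γ) (R β γ))

def RespectsEqRight (R : PreW A → PreW A → A) : Prop :=
  ∃ c ∈ IA.Sig, ∀ α β γ, c ≤ IA.imp (IA.eqW α β) (IA.imp (R γ α) (R γ β))

theorem respectsEqLeft_eqW : IA.RespectsEqLeft IA.eqW := by
  obtain ⟨σ, hσ, hσle⟩ := IA.exists_eqW_symm
  refine ⟨IA.abs fun p => IA.app IA.eqTrans (IA.app σ p),
    Definable.mem_Sig (.abs (.app (.const IA.eqTrans_mem_Sig) (.app (.const hσ) (.var _)))),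
    fun α β γ => IA.abs_le_imp ?_⟩
  exact IA.app_le_of_le (IA.eqTrans_le β α γ) (IA.app_le (hσle α β))

theorem respectsEqRight_eqW : IA.RespectsEqRight IA.eqW := by
  refine ⟨IA.abs fun p => IA.abs fun q => IA.app (IA.app IA.eqTrans q) p,
    Definable.mem_Sig (.abs (.abs (.app (.app (.const IA.eqTrans_mem_Sig) (.var _))
      (.var _)))),
    fun α β γ => IA.abs_le_imp (IA.abs_le_imp ?_)⟩
  exact IA.app_le_of_le (IA.app_le (IA.eqTrans_le γ α β)) le_rfl

theorem respectsEqLeft_memW : IA.RespectsEqLeft IA.memW := by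
  refine ⟨IA.abs fun p => IA.abs fun m => IA.app m (IA.abs fun w =>
      IA.inj (IA.pair (IA.fst w) (IA.app (IA.app IA.eqTrans (IA.snd w)) p))),
    Definable.mem_Sig (.abs (.abs (.app (.var _) (.abs (.inj (.pair (.fst (.var _))
      (.app (.app (.const IA.eqTrans_mem_Sig) (.snd (.var _))) (.var _)))))))),
    fun α β γ => IA.abs_le_imp (IA.abs_le_imp ?_)⟩
  refine IA.app_le_of_le_aex le_rfl fun s => IA.abs_le_imp ?_
  refine IA.inj_le_aex s (IA.pair_le_times (IA.fst_le le_rfl) ?_)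
  exact IA.app_le_of_le (IA.app_le_of_le (IA.eqTrans_le _ α β) (IA.snd_le le_rfl)) le_rfl

theorem respectsEqRight_memW : IA.RespectsEqRight IA.memW := by
  refine ⟨IA.abs fun p => IA.abs fun m => IA.app m (IA.abs fun w =>
      IA.app (IA.app (IA.fst p) (IA.fst w)) (IA.abs fun w' =>
        IA.inj (IA.pair (IA.fst w') (IA.app (IA.app IA.eqTrans (IA.snd w')) (IA.snd w))))),
    Definable.mem_Sig (.abs (.abs (.app (.var _) (.abs (.app (.app (.fst (.var _))
      (.fst (.var _))) (.abs (.inj (.pair (.fst (.var _))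
        (.app (.app (.const IA.eqTrans_mem_Sig) (.snd (.var _))) (.snd (.var _))))))))))),
    fun α β γ => IA.abs_le_imp (IA.abs_le_imp ?_)⟩
  refine IA.app_le_of_le_aex le_rfl fun s => IA.abs_le_imp ?_
  have hαβ := IA.fst_le (IA.eqW_eq_times_subW α β).le
  refine IA.app_le_of_le_aex (IA.app_le_of_le (hαβ.trans (iInf_le _ s)) (IA.fst_le le_rfl))
    fun r => IA.abs_le_imp ?_
  refine IA.inj_le_aex r (IA.pair_le_times (IA.fst_le le_rfl) ?_)
  exact IA.app_le_of_le (IA.app_le_of_le (IA.eqTrans_le _ _ γ) (IA.snd_le le_rfl))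
    (IA.snd_le le_rfl)

theorem exists_le_imp_imp_self : ∃ c ∈ IA.Sig, ∀ a b : A, c ≤ IA.imp a (IA.imp b b) :=
  ⟨IA.abs fun _ => IA.abs fun b => b, Definable.mem_Sig (.abs (.abs (.var _))),
    fun _ _ => IA.abs_le_imp (IA.abs_le_imp le_rfl)⟩

section Substitutive

variable {κ : Cardinal.{u}}

def Substitutive {m : ℕ} (P : (Fin m → WSet A κ) → A) (j : Fin m) : Prop :=
  ∃ L ∈ IA.Sig, ∀ v β,
    L ≤ IA.imp (IA.eqW (v j).1 β.1) (IA.imp (P v) (P (Function.update v j β)))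

variable {IA} {m : ℕ} {P Q : (Fin m → WSet A κ) → A} {j : Fin m}

theorem substitutive_const (c : A) (j : Fin m) :
    IA.Substitutive (fun _ : Fin m → WSet A κ => c) j :=
  have ⟨c, hc, hcle⟩ := IA.exists_le_imp_imp_self
  ⟨c, hc, fun _ _ => hcle _ _⟩

theorem substitutive_of_respectsEq {R : PreW A → PreW A → A} (hl : IA.RespectsEqLeft R)
    (hr : IA.RespectsEqRight R) (i k j : Fin m) :
    IA.Substitutive (fun v : Fin m → WSet A κ => R (v i).1 (v k).1) j := by
  obtain ⟨cl, hcl, hclle⟩ := hl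
  obtain ⟨cr, hcr, hcrle⟩ := hr
  by_cases hi : i = j <;> by_cases hk : k = j
  · subst hi hk
    refine ⟨IA.abs fun p => IA.abs fun x => IA.app (IA.app cr p) (IA.app (IA.app cl p) x),
      Definable.mem_Sig (.abs (.abs (.app (.app (.const hcr) (.var _))
        (.app (.app (.const hcl) (.var _)) (.var _))))),
      fun v β => IA.abs_le_imp (IA.abs_le_imp ?_)⟩
    simp only [Function.update_self]
    exact IA.app_le_of_le (IA.app_le (hcrle _ _ _)) (IA.app_le (IA.app_le (hclle _ _ _)))
  · subst hi
    refine ⟨cl, hcl, fun v β => ?_⟩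
    simpa only [Function.update_self, Function.update_of_ne hk] using hclle _ _ _
  · subst hk
    refine ⟨cr, hcr, fun v β => ?_⟩
    simpa only [Function.update_self, Function.update_of_ne hi] using hcrle _ _ _
  · obtain ⟨c, hc, hcle⟩ := IA.exists_le_imp_imp_self
    refine ⟨c, hc, fun v β => ?_⟩
    simpa only [Function.update_of_ne hi, Function.update_of_ne hk] using hcle _ _

theorem Substitutive.times (hP : IA.Substitutive P j) (hQ : IA.Substitutive Q j) :
    IA.Substitutive (fun v => IA.times (P v) (Q v)) j := by
  obtain ⟨L₁, hL₁, hL₁le⟩ := hP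
  obtain ⟨L₂, hL₂, hL₂le⟩ := hQ
  refine ⟨IA.abs fun p => IA.abs fun x =>
      IA.pair (IA.app (IA.app L₁ p) (IA.fst x)) (IA.app (IA.app L₂ p) (IA.snd x)),
    Definable.mem_Sig (.abs (.abs (.pair
      (.app (.app (.const hL₁) (.var _)) (.fst (.var _)))
      (.app (.app (.const hL₂) (.var _)) (.snd (.var _)))))),
    fun v β => IA.abs_le_imp (IA.abs_le_imp (IA.pair_le_times ?_ ?_))⟩
  · exact IA.app_le_of_le (IA.app_le (hL₁le v β)) (IA.fst_le le_rfl)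
  · exact IA.app_le_of_le (IA.app_le (hL₂le v β)) (IA.snd_le le_rfl)

theorem Substitutive.plus (hP : IA.Substitutive P j) (hQ : IA.Substitutive Q j) :
    IA.Substitutive (fun v => IA.plus (P v) (Q v)) j := by
  obtain ⟨L₁, hL₁, hL₁le⟩ := hP
  obtain ⟨L₂, hL₂, hL₂le⟩ := hQ
  refine ⟨IA.abs fun p => IA.abs fun x => IA.abs fun k₁ => IA.abs fun k₂ =>
      IA.app (IA.app x (IA.abs fun a => IA.app k₁ (IA.app (IA.app L₁ p) a)))
        (IA.abs fun b => IA.app k₂ (IA.app (IA.app L₂ p) b)),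
    Definable.mem_Sig (.abs (.abs (.abs (.abs (.app
      (.app (.var _) (.abs (.app (.var _) (.app (.app (.const hL₁) (.var _)) (.var _)))))
      (.abs (.app (.var _) (.app (.app (.const hL₂) (.var _)) (.var _))))))))),
    fun v β => IA.abs_le_imp (IA.abs_le_imp (le_iInf fun x => ?_))⟩
  refine IA.abs_le_imp (IA.abs_le_imp (IA.app_le_of_le (IA.app_le_of_le (iInf_le _ x) ?_) ?_))
  · exact IA.abs_le_imp (IA.app_le_of_le le_rfl (IA.app_le (IA.app_le (hL₁le v β))))
  · exact IA.abs_le_imp (IA.app_le_of_le le_rfl (IA.app_le (IA.app_le (hL₂le v β))))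

theorem Substitutive.imp (hP : IA.Substitutive P j) (hQ : IA.Substitutive Q j) :
    IA.Substitutive (fun v => IA.imp (P v) (Q v)) j := by
  obtain ⟨L₁, hL₁, hL₁le⟩ := hP
  obtain ⟨L₂, hL₂, hL₂le⟩ := hQ
  obtain ⟨σ, hσ, hσle⟩ := IA.exists_eqW_symm
  refine ⟨IA.abs fun p => IA.abs fun x => IA.abs fun a =>
      IA.app (IA.app L₂ p) (IA.app x (IA.app (IA.app L₁ (IA.app σ p)) a)),
    Definable.mem_Sig (.abs (.abs (.abs (.app (.app (.const hL₂) (.var _))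
      (.app (.var _) (.app (.app (.const hL₁) (.app (.const hσ) (.var _))) (.var _))))))),
    fun v β => IA.abs_le_imp (IA.abs_le_imp (IA.abs_le_imp ?_))⟩
  have hback := hL₁le (Function.update v j β) (v j)
  rw [Function.update_self, Function.update_idem, Function.update_eq_self] at hback
  exact IA.app_le_of_le (IA.app_le (hL₂le v β)) (IA.app_le_of_le le_rfl
    (IA.app_le (IA.app_le_of_le hback (IA.app_le (hσle _ _)))))

theorem Substitutive.aex {P : (Fin (m + 1) → WSet A κ) → A}
    (hP : IA.Substitutive P j.castSucc) :
    IA.Substitutive (fun v => IA.aex fun y => P (Fin.snoc v y)) j := by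
  obtain ⟨L, hL, hLle⟩ := hP
  refine ⟨IA.abs fun p => IA.abs fun x =>
      IA.app x (IA.abs fun w => IA.inj (IA.app (IA.app L p) w)),
    Definable.mem_Sig (.abs (.abs (.app (.var _)
      (.abs (.inj (.app (.app (.const hL) (.var _)) (.var _))))))),
    fun v β => IA.abs_le_imp (IA.abs_le_imp ?_)⟩
  refine IA.app_le_of_le_aex le_rfl fun y => IA.abs_le_imp (IA.inj_le_aex y ?_)
  have h := hLle (Fin.snoc v y) β
  rw [Fin.snoc_castSucc, ← Fin.snoc_update] at h
  exact IA.app_le (IA.app_le h)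

theorem Substitutive.iInf {P : (Fin (m + 1) → WSet A κ) → A}
    (hP : IA.Substitutive P j.castSucc) :
    IA.Substitutive (fun v => ⨅ y, P (Fin.snoc v y)) j := by
  obtain ⟨L, hL, hLle⟩ := hP
  refine ⟨L, hL, fun v β => ?_⟩
  simp only [IA.imp_iInf]
  refine le_iInf fun y => ?_
  have h := hLle (Fin.snoc v y) β
  rw [Fin.snoc_castSucc, ← Fin.snoc_update] at h
  exact h.trans (IA.imp_monotone (IA.imp_antitone (iInf_le _ y)))

theorem substitutive_interp (φ : SetFormula m) (j : Fin m) :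
    IA.Substitutive (IA.interp κ φ) j := by
  induction φ with
  | bot => exact substitutive_const ⊥ j
  | mem i k => exact substitutive_of_respectsEq IA.respectsEqLeft_memW IA.respectsEqRight_memW i k j
  | eq i k => exact substitutive_of_respectsEq IA.respectsEqLeft_eqW IA.respectsEqRight_eqW i k j
  | and φ ψ ihφ ihψ => exact (ihφ j).times (ihψ j)
  | or φ ψ ihφ ihψ => exact (ihφ j).plus (ihψ j)
  | imp φ ψ ihφ ihψ => exact (ihφ j).imp (ihψ j)
  | ex φ ih => exact (ih j.castSucc).aex
  | all φ ih => exact (ih j.castSucc).iInf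

end Substitutive

section Separation

variable {κ : Cardinal.{u}}

/-- The separation set `{z ∈ x | P z}`. -/
def sepW (x : WSet A κ) (P : WSet A κ → A) : WSet A κ :=
  ⟨.mk x.1.dom x.1.fam fun t => IA.times (x.1.val t) (P (x.fam t)), x.2.mk_dom_fam _⟩

variable {ι : Sort*} {P : ι → WSet A κ → A}

def ExtensionalFamily (P : ι → WSet A κ → A) : Prop :=
  ∃ L ∈ IA.Sig, ∀ i a b, L ≤ IA.imp (IA.eqW a.1 b.1) (IA.imp (P i a) (P i b))

theorem Substitutive.extensionalFamily_snoc {m : ℕ} {P : (Fin (m + 1) → WSet A κ) → A}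
    (hP : IA.Substitutive P (Fin.last m)) :
    IA.ExtensionalFamily fun (v : Fin m → WSet A κ) z => P (Fin.snoc v z) := by
  obtain ⟨L, hL, hLle⟩ := hP
  refine ⟨L, hL, fun v a b => ?_⟩
  simpa only [Fin.snoc_last, Fin.update_snoc_last] using hLle (Fin.snoc v a) b

theorem exists_realizer_sepW_sub (hP : IA.ExtensionalFamily P) :
    ∃ c ∈ IA.Sig, ∀ i (x : WSet A κ), c ≤ ⨅ z : WSet A κ,
    IA.imp (IA.memW z.1 (IA.sepW x (P i)).1) (IA.times (IA.memW z.1 x.1) (P i z)) := by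
  obtain ⟨L, hL, hLle⟩ := hP
  refine ⟨IA.abs fun u => IA.app u (IA.abs fun w => IA.pair
      (IA.inj (IA.pair (IA.fst (IA.fst w)) (IA.snd w)))
      (IA.app (IA.app L (IA.snd w)) (IA.snd (IA.fst w)))),
    Definable.mem_Sig (.abs (.app (.var _) (.abs (.pair
      (.inj (.pair (.fst (.fst (.var _))) (.snd (.var _))))
      (.app (.app (.const hL) (.snd (.var _))) (.snd (.fst (.var _)))))))),
    fun i x => le_iInf fun z => IA.abs_le_imp ?_⟩
  refine IA.app_le_of_le_aex le_rfl fun s => IA.abs_le_imp (IA.pair_le_times ?_ ?_)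
  · exact IA.inj_le_aex s
      (IA.pair_le_times (IA.fst_le (IA.fst_le le_rfl)) (IA.snd_le le_rfl))
  · exact IA.app_le_of_le (IA.app_le_of_le (hLle i (x.fam s) z) (IA.snd_le le_rfl))
      (IA.snd_le (IA.fst_le le_rfl))

theorem exists_realizer_sub_sepW (hP : IA.ExtensionalFamily P) :
    ∃ c ∈ IA.Sig, ∀ i (x : WSet A κ), c ≤ ⨅ z : WSet A κ,
    IA.imp (IA.memW z.1 x.1) (IA.imp (P i z) (IA.memW z.1 (IA.sepW x (P i)).1)) := by
  obtain ⟨L, hL, hLle⟩ := hP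
  obtain ⟨σ, hσ, hσle⟩ := IA.exists_eqW_symm
  refine ⟨IA.abs fun u => IA.abs fun d => IA.app u (IA.abs fun w => IA.inj (IA.pair
      (IA.pair (IA.fst w) (IA.app (IA.app L (IA.app σ (IA.snd w))) d)) (IA.snd w))),
    Definable.mem_Sig (.abs (.abs (.app (.var _) (.abs (.inj (.pair
      (.pair (.fst (.var _)) (.app (.app (.const hL) (.app (.const hσ) (.snd (.var _))))
        (.var _)))
      (.snd (.var _)))))))),
    fun i x => le_iInf fun z => IA.abs_le_imp (IA.abs_le_imp ?_)⟩
  refine IA.app_le_of_le_aex le_rfl fun s => IA.abs_le_imp (IA.inj_le_aex s ?_)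
  refine IA.pair_le_times (IA.pair_le_times (IA.fst_le le_rfl) ?_) (IA.snd_le le_rfl)
  exact IA.app_le_of_le (IA.app_le_of_le (hLle i z (x.fam s))
    (IA.app_le_of_le (hσle _ _) (IA.snd_le le_rfl))) le_rfl

theorem exists_realizer_separation (hP : IA.ExtensionalFamily P) :
    ∃ r ∈ IA.Sig, ∀ i (x : WSet A κ), r ≤ IA.aex fun y : WSet A κ =>
    IA.times (⨅ z : WSet A κ, IA.imp (IA.memW z.1 y.1) (IA.times (IA.memW z.1 x.1) (P i z)))
      (⨅ z : WSet A κ, IA.imp (IA.memW z.1 x.1) (IA.imp (P i z) (IA.memW z.1 y.1))) := by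
  obtain ⟨c₁, hc₁, hc₁le⟩ := IA.exists_realizer_sepW_sub hP
  obtain ⟨c₂, hc₂, hc₂le⟩ := IA.exists_realizer_sub_sepW hP
  exact ⟨IA.inj (IA.pair c₁ c₂),
    Definable.mem_Sig (.inj (.pair (.const hc₁) (.const hc₂))),
    fun i x => IA.inj_le_aex (IA.sepW x (P i)) (IA.pair_le_times (hc₁le i x) (hc₂le i x))⟩

end Separation

section Interp

variable (κ : Cardinal.{u})

theorem interp_rename {n m : ℕ} (ψ : SetFormula n) (r : Fin n → Fin m)
    (v : Fin m → WSet A κ) :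
    IA.interp κ (ψ.rename r) v = IA.interp κ ψ (fun i => v (r i)) := by
  induction ψ generalizing m with
  | bot | mem | eq => rfl
  | and φ ψ ihφ ihψ | or φ ψ ihφ ihψ | imp φ ψ ihφ ihψ =>
    simp only [SetFormula.rename, interp, ihφ, ihψ]
  | ex φ ih | all φ ih =>
    simp only [SetFormula.rename, interp, ih]
    congr! 2 with y
    congr 1
    funext i
    refine Fin.lastCases ?_ (fun j => ?_) i <;> simp

theorem le_interp_allClose {r : A} :
    ∀ {n} {φ : SetFormula n}, (∀ v, r ≤ IA.interp κ φ v) →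
    ∀ v, r ≤ IA.interp κ φ.allClose v
  | 0, _, h, v => h v
  | _ + 1, _, h, v => le_interp_allClose (φ := .all _) (fun _ => le_iInf fun _ => h _) v

end Interp

end ImplicativeAlgebra

theorem stmt17 {A : Type u} [CompleteLattice A] (IA : ImplicativeAlgebra A)
    (κ : Cardinal.{u}) (n : ℕ) (φ : SetFormula (n + 2)) :
    IA.interp κ
      (SetFormula.allClose (SetFormula.all (SetFormula.ex
        ((SetFormula.all
            ((SetFormula.mem (⟨n + 2, by omega⟩ : Fin (n + 3)) ⟨n + 1, by omega⟩).imp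
              ((SetFormula.mem (⟨n + 2, by omega⟩ : Fin (n + 3)) ⟨n, by omega⟩).and
                (φ.rename (Fin.snoc (fun i => i.castSucc.castSucc) (Fin.last (n + 2))))))).and
         (SetFormula.all
            ((SetFormula.mem (⟨n + 2, by omega⟩ : Fin (n + 3)) ⟨n, by omega⟩).imp
              ((φ.rename (Fin.snoc (fun i => i.castSucc.castSucc) (Fin.last (n + 2)))).imp
                (SetFormula.mem (⟨n + 2, by omega⟩ : Fin (n + 3)) ⟨n + 1, by omega⟩))))))))
      (fun i => i.elim0) ∈ IA.Sig := by
  obtain ⟨r, hr, hrle⟩ := IA.exists_realizer_separation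
    (IA.substitutive_interp (κ := κ) φ (Fin.last (n + 1))).extensionalFamily_snoc
  refine IA.Sig_upward hr (IA.le_interp_allClose κ (fun v => le_iInf fun x => ?_) _)
  simp only [ImplicativeAlgebra.interp, IA.interp_rename]
  have hz : (⟨n + 2, by omega⟩ : Fin (n + 3)) = Fin.last (n + 2) := rfl
  have hy : (⟨n + 1, by omega⟩ : Fin (n + 3)) = (Fin.last (n + 1)).castSucc := rfl
  have hx : (⟨n, by omega⟩ : Fin (n + 3)) = (Fin.last n).castSucc.castSucc := rfl
  have hφ : ∀ y z : WSet A κ,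
      (fun i => (Fin.snoc (Fin.snoc (Fin.snoc v x) y) z : Fin (n + 3) → WSet A κ)
        ((Fin.snoc (fun i => i.castSucc.castSucc) (Fin.last (n + 2)) :
          Fin (n + 2) → Fin (n + 3)) i)) = Fin.snoc (Fin.snoc v x) z := fun y z => by
    funext i
    refine Fin.lastCases ?_ (fun j => ?_) i <;> simp
  simp only [hz, hy, hx, hφ, Fin.snoc_last, Fin.snoc_castSucc]
  exact hrle (Fin.snoc v x) x
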